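/- arXiv:1604.03306 — 2 statements merged into one kernel-verified Lean document; each statement's English description precedes it below -/
import Mathlib

section
/- Let A be an m×n real matrix, K ≥ 1 an integer, T, Λ ⊆ {1,…,n} index sets with |T| ≤ K and T nonempty, and let ω ∈ ℝⁿ be a vector whose support is contained in T ∪ Λ and which satisfies ⟨Aeⱼ, Aω⟩ = 0 for every j ∈ Λ. Then ‖Aω‖₂² ≤ √K · ‖ω‖₂ · max_{i∈T} |⟨Aeᵢ, Aω⟩|. -/
open scoped InnerProductSpace BigOperators

/-!
Expanding `Aω = ∑ⱼ ωⱼ Aeⱼ` gives `‖Aω‖² = ∑ⱼ ωⱼ ⟨Aeⱼ, Aω⟩`. Off `T` every term vanishes, either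
because `ωⱼ = 0` or because `j ∈ Λ`, so the sum is at most `maxᵢ∈T |⟨Aeᵢ, Aω⟩| · ∑ⱼ∈T |ωⱼ|`, and
Cauchy–Schwarz bounds `∑ⱼ∈T |ωⱼ| ≤ √|T| ‖ω‖₂`.
-/

/-- Regard a plain vector in `Fin m → ℝ` as an element of Euclidean space
(so that `‖·‖` is the Euclidean norm and `⟪·,·⟫_ℝ` the Euclidean inner product). -/
noncomputable def toE {m : ℕ} (v : Fin m → ℝ) : EuclideanSpace ℝ (Fin m) := WithLp.toLp 2 v

/-- The `j`-th column of the matrix `A`, viewed as a vector in Euclidean space. -/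
noncomputable def col {m n : ℕ} (A : Matrix (Fin m) (Fin n) ℝ) (j : Fin n) :
    EuclideanSpace ℝ (Fin m) := WithLp.toLp 2 (fun i => A i j)

open Finset

theorem EuclideanSpace.sum_abs_le_sqrt_card_mul_norm {ι : Type*} [Fintype ι]
    (x : EuclideanSpace ℝ ι) (s : Finset ι) :
    ∑ i ∈ s, |x i| ≤ √(#s) * ‖x‖ := by
  rw [EuclideanSpace.norm_eq, ← Real.sqrt_mul (Nat.cast_nonneg _)]
  refine Real.le_sqrt_of_sq_le <|
    (sq_sum_le_card_mul_sum_sq (s := s) (f := fun i => |x i|)).trans ?_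
  gcongr
  simpa only [Real.norm_eq_abs, sq_abs] using
    sum_le_sum_of_subset_of_nonneg (subset_univ s) fun i _ _ => sq_nonneg (x i)

theorem Finset.sum_mul_le_sup'_abs_mul_sum_abs {ι : Type*} {s : Finset ι} (hs : s.Nonempty)
    (f g : ι → ℝ) : ∑ i ∈ s, f i * g i ≤ s.sup' hs (fun i => |g i|) * ∑ i ∈ s, |f i| := by
  rw [mul_sum]
  refine sum_le_sum fun i hi => ?_
  calc f i * g i ≤ |f i| * |g i| := (le_abs_self _).trans (abs_mul _ _).le
    _ ≤ |f i| * s.sup' hs (fun i => |g i|) := by gcongr; exact le_sup' (fun i => |g i|) hi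
    _ = _ := mul_comm _ _

theorem toE_mulVec_eq_sum_smul_col {m n : ℕ} (A : Matrix (Fin m) (Fin n) ℝ) (ω : Fin n → ℝ) :
    toE (A.mulVec ω) = ∑ j, ω j • col A j := by
  ext i
  simp [toE, col, Matrix.mulVec, dotProduct, mul_comm]

theorem inner_toE_mulVec {m n : ℕ} (A : Matrix (Fin m) (Fin n) ℝ) (ω : Fin n → ℝ)
    (v : EuclideanSpace ℝ (Fin m)) :
    ⟪toE (A.mulVec ω), v⟫_ℝ = ∑ j, ω j * ⟪col A j, v⟫_ℝ := by
  simp only [toE_mulVec_eq_sum_smul_col, sum_inner, real_inner_smul_left]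

theorem stmt5_general {m n : ℕ} (A : Matrix (Fin m) (Fin n) ℝ) (K : ℕ)
    (T Λ : Finset (Fin n)) (hTne : T.Nonempty) (hTK : T.card ≤ K)
    (ω : Fin n → ℝ) (hsupp : ∀ i, ω i ≠ 0 → i ∈ T ∪ Λ)
    (horth : ∀ j ∈ Λ, ⟪col A j, toE (A.mulVec ω)⟫_ℝ = 0) :
    ‖toE (A.mulVec ω)‖ ^ 2
      ≤ Real.sqrt K * ‖toE ω‖ *
        T.sup' hTne (fun i => |⟪col A i, toE (A.mulVec ω)⟫_ℝ|) := by
  set c := fun j => ⟪col A j, toE (A.mulVec ω)⟫_ℝ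
  have hsup_nonneg : 0 ≤ T.sup' hTne (fun i => |c i|) :=
    (abs_nonneg _).trans (le_sup' (fun i => |c i|) hTne.choose_spec)
  have h_vanish : ∀ j ∉ T, ω j * c j = 0 := fun j hjT => by
    by_contra h
    have hjΛ := (mem_union.1 (hsupp j (left_ne_zero_of_mul h))).resolve_left hjT
    exact right_ne_zero_of_mul h (horth j hjΛ)
  calc ‖toE (A.mulVec ω)‖ ^ 2 = ∑ j, ω j * c j := by
        rw [← real_inner_self_eq_norm_sq, inner_toE_mulVec]
    _ = ∑ j ∈ T, ω j * c j := (sum_subset (subset_univ T) fun j _ hj => h_vanish j hj).symm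
    _ ≤ T.sup' hTne (fun i => |c i|) * ∑ j ∈ T, |ω j| :=
        T.sum_mul_le_sup'_abs_mul_sum_abs hTne ω c
    _ ≤ T.sup' hTne (fun i => |c i|) * (√K * ‖toE ω‖) := by
        gcongr
        refine (EuclideanSpace.sum_abs_le_sqrt_card_mul_norm (toE ω) T).trans ?_
        gcongr
    _ = √K * ‖toE ω‖ * T.sup' hTne (fun i => |c i|) := mul_comm _ _

/-- If `ω` is supported in `T ∪ Λ`, with `T` nonempty, `|T| ≤ K`, and `Aω` is orthogonal to
the columns of `A` indexed by `Λ`, then `‖Aω‖₂² ≤ √K ‖ω‖₂ max_{i∈T} |⟨Aeᵢ, Aω⟩|`. -/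
theorem stmt5 {m n : ℕ} (A : Matrix (Fin m) (Fin n) ℝ) (K : ℕ) (hK : 1 ≤ K)
    (T Λ : Finset (Fin n)) (hTne : T.Nonempty) (hTK : T.card ≤ K)
    (ω : Fin n → ℝ) (hsupp : ∀ i, ω i ≠ 0 → i ∈ T ∪ Λ)
    (horth : ∀ j ∈ Λ, ⟪col A j, toE (A.mulVec ω)⟫_ℝ = 0) :
    ‖toE (A.mulVec ω)‖ ^ 2
      ≤ Real.sqrt K * ‖toE ω‖ *
        T.sup' hTne (fun i => |⟪col A i, toE (A.mulVec ω)⟫_ℝ|) :=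
  stmt5_general A K T Λ hTne hTK ω hsupp horth
end

section
/- Let K, N ≥ 1 be integers and let A be an m×n real matrix satisfying the restricted isometry property of order NK+1 with constant δ, where δ < 1/√(K/N + 1). Let x ∈ ℝⁿ be a vector whose support T satisfies |T| ≤ K, and let Λ ⊆ {1,…,n} be an index set such that T \ Λ ≠ ∅ and |T ∪ Λ| + N ≤ NK + 1. Let P_Λ denote the orthogonal projection of ℝᵐ onto the span of the columns {Aeⱼ : j ∈ Λ}, and set r = Ax − P_Λ(Ax). Then for every set W ⊆ {1,…,n} with |W| = N and W ∩ (T ∪ Λ) = ∅, one has max_{i∈T\Λ} |⟨Aeᵢ, r⟩| > min_{i∈W} |⟨Aeᵢ, r⟩|. (Consequently, if the generalized orthogonal matching pursuit has selected at least one correct index in each of its first k < K iterations, it selects at least one correct index in the (k+1)-th iteration.) -/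
open scoped InnerProductSpace BigOperators

/-- The number of nonzero entries of a vector. -/
noncomputable def sparsity {n : ℕ} (z : Fin n → ℝ) : ℕ :=
  (Finset.univ.filter (fun i => z i ≠ 0)).card

/-- `A` satisfies the restricted isometry property of order `s` with constant `δ`:
`(1−δ)‖z‖₂² ≤ ‖Az‖₂² ≤ (1+δ)‖z‖₂²` for every vector `z` with at most `s` nonzero entries. -/
def RIP {m n : ℕ} (A : Matrix (Fin m) (Fin n) ℝ) (s : ℕ) (δ : ℝ) : Prop :=
  ∀ z : Fin n → ℝ, sparsity z ≤ s →
    (1 - δ) * ‖toE z‖ ^ 2 ≤ ‖toE (A.mulVec z)‖ ^ 2 ∧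
    ‖toE (A.mulVec z)‖ ^ 2 ≤ (1 + δ) * ‖toE z‖ ^ 2

/-- Orthogonal projection of `ℝᵐ` onto the span of the columns of `A` indexed by `Λ`. -/
noncomputable def projSpan {m n : ℕ} (A : Matrix (Fin m) (Fin n) ℝ) (Λ : Finset (Fin n))
    (v : EuclideanSpace ℝ (Fin m)) : EuclideanSpace ℝ (Fin m) :=
  Submodule.orthogonalProjectionOnto (Submodule.span ℝ ((fun j => col A j) '' (Λ : Set (Fin n)))) v

/-! Write `R z = Az − P_Λ(Az)`, so that `r = R u` for the part `u` of `x` on `S = T \ Λ`.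
If the claim failed, every correlation `|⟪Aeᵢ, r⟫|` with `i ∈ W` would be at least
`α = max_{i ∈ S} |⟪Aeᵢ, r⟫|`. Taking for `w` the signs of these correlations on `W` gives
`⟪r, R w⟫ ≥ N α`, while `‖r‖² = ⟪Au, r⟫ ≤ α √|S| ‖u‖`. On the other hand, the RIP bounds for
`(μ + 1) u − t w` (from below) and `(μ − 1) u + t w` (from above), combined through polarization,
give `(1 − δμ) ‖u‖² ≤ ‖r‖² − t ⟪r, R w⟫`. With `μ = √(|S|/N + 1)` and `t = √|S| ‖u‖ / N` the right
side is nonpositive, contradicting `δμ < 1`. -/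

open Function

section InnerProductSpace

variable {E : Type*} [NormedAddCommGroup E] [InnerProductSpace ℝ E]

lemma norm_smul_add_smul_sq_of_inner_eq_zero {a b : E} (h : ⟪a, b⟫_ℝ = 0) (c d : ℝ) :
    ‖c • a + d • b‖ ^ 2 = c ^ 2 * ‖a‖ ^ 2 + d ^ 2 * ‖b‖ ^ 2 := by
  rw [← real_inner_self_eq_norm_sq, ← real_inner_self_eq_norm_sq, ← real_inner_self_eq_norm_sq,
    real_inner_add_add_self]
  simp only [real_inner_smul_left, real_inner_smul_right, h]
  ring

lemma norm_sq_sub_norm_sq_eq (μ t : ℝ) (a b : E) :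
    ‖(μ + 1) • a - t • b‖ ^ 2 - ‖(μ - 1) • a + t • b‖ ^ 2 = 4 * μ * (‖a‖ ^ 2 - t * ⟪a, b⟫_ℝ) := by
  rw [← real_inner_self_eq_norm_sq, ← real_inner_self_eq_norm_sq, ← real_inner_self_eq_norm_sq,
    real_inner_sub_sub_self, real_inner_add_add_self]
  simp only [real_inner_smul_left, real_inner_smul_right]
  ring

end InnerProductSpace

section Coordinates

variable {n : ℕ}

lemma inner_toE (y z : Fin n → ℝ) : ⟪toE y, toE z⟫_ℝ = ∑ i, y i * z i := by
  simp [toE, PiLp.inner_apply, mul_comm]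

lemma norm_toE_sq (z : Fin n → ℝ) : ‖toE z‖ ^ 2 = ∑ i, z i ^ 2 := by
  rw [← real_inner_self_eq_norm_sq, inner_toE]
  simp only [sq]

lemma inner_toE_eq_zero_of_disjoint {y z : Fin n → ℝ} (h : Disjoint (support y) (support z)) :
    ⟪toE y, toE z⟫_ℝ = 0 := by
  rw [inner_toE]
  refine Finset.sum_eq_zero fun i _ => ?_
  by_cases hy : y i = 0
  · rw [hy, zero_mul]
  · rw [not_not.1 (Set.disjoint_left.1 h hy), mul_zero]

lemma sparsity_le_card {z : Fin n → ℝ} {F : Finset (Fin n)} (hz : support z ⊆ F) :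
    sparsity z ≤ F.card :=
  Finset.card_le_card fun _ hi => hz (Finset.mem_filter.1 hi).2

lemma sum_mul_le_sup'_mul_sqrt_card_mul_norm {S : Finset (Fin n)} (hS : S.Nonempty)
    {u : Fin n → ℝ} (hu : support u ⊆ S) (c : Fin n → ℝ) :
    ∑ j, u j * c j ≤ S.sup' hS (fun j => |c j|) * (√S.card * ‖toE u‖) := by
  set α := S.sup' hS (fun j => |c j|)
  have hα : 0 ≤ α := (abs_nonneg _).trans (S.le_sup' (fun j => |c j|) hS.choose_spec)
  have hl1 : ∑ j ∈ S, |u j| ≤ √S.card * ‖toE u‖ := by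
    rw [← Real.sqrt_sq (norm_nonneg (toE u)), ← Real.sqrt_mul (Nat.cast_nonneg _)]
    refine Real.le_sqrt_of_sq_le ?_
    calc (∑ j ∈ S, |u j|) ^ 2 ≤ S.card * ∑ j ∈ S, |u j| ^ 2 := sq_sum_le_card_mul_sum_sq
      _ = S.card * ‖toE u‖ ^ 2 := by
        rw [norm_toE_sq, ← Finset.sum_subset (Finset.subset_univ S) fun j _ hj =>
          by rw [not_not.1 fun h => hj (hu h), sq, zero_mul]]
        simp only [sq_abs]
  rw [← Finset.sum_subset (Finset.subset_univ S) fun j _ hj =>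
    by rw [not_not.1 fun h => hj (hu h), zero_mul]]
  calc ∑ j ∈ S, u j * c j ≤ ∑ j ∈ S, |u j| * α := Finset.sum_le_sum fun j hj =>
        (le_abs_self _).trans ((abs_mul _ _).trans_le
          (mul_le_mul_of_nonneg_left (S.le_sup' (fun j => |c j|) hj) (abs_nonneg _)))
    _ = α * ∑ j ∈ S, |u j| := by rw [Finset.mul_sum]; simp only [mul_comm]
    _ ≤ α * (√S.card * ‖toE u‖) := mul_le_mul_of_nonneg_left hl1 hα

lemma exists_sign_vector (W : Finset (Fin n)) (c : Fin n → ℝ) :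
    ∃ w : Fin n → ℝ, support w ⊆ W ∧ ‖toE w‖ ^ 2 = W.card ∧
      ∑ j, w j * c j = ∑ j ∈ W, |c j| := by
  classical
  refine ⟨fun j => if j ∈ W then (if 0 ≤ c j then 1 else -1) else 0, fun j hj => ?_, ?_, ?_⟩
  · by_contra h
    exact hj (if_neg h)
  · rw [norm_toE_sq, ← Finset.sum_subset (Finset.subset_univ W) fun j _ hj => by simp [hj]]
    rw [Finset.card_eq_sum_ones, Nat.cast_sum, Nat.cast_one]
    refine Finset.sum_congr rfl fun j hj => ?_
    split_ifs <;> norm_num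
  · rw [← Finset.sum_subset (Finset.subset_univ W) fun j _ hj => by simp [hj]]
    refine Finset.sum_congr rfl fun j hj => ?_
    dsimp only
    rw [if_pos hj]
    split_ifs with h
    · rw [one_mul, abs_of_nonneg h]
    · rw [abs_of_neg (not_le.1 h)]; ring

end Coordinates

open scoped Matrix

section Residual

variable {m n : ℕ} (A : Matrix (Fin m) (Fin n) ℝ) (Λ : Finset (Fin n))

noncomputable def colSpan : Submodule ℝ (EuclideanSpace ℝ (Fin m)) :=
  Submodule.span ℝ ((fun j => col A j) '' (Λ : Set (Fin n)))

noncomputable def residualMap : (Fin n → ℝ) →ₗ[ℝ] EuclideanSpace ℝ (Fin m) :=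
  (colSpan A Λ)ᗮ.starProjection.toLinearMap ∘ₗ
    (WithLp.linearEquiv 2 ℝ (Fin m → ℝ)).symm.toLinearMap ∘ₗ A.mulVecLin

variable {A Λ}

lemma residualMap_apply (z : Fin n → ℝ) :
    residualMap A Λ z = (colSpan A Λ)ᗮ.starProjection (toE (A *ᵥ z)) :=
  rfl

lemma sub_projSpan_eq_residualMap (z : Fin n → ℝ) :
    toE (A *ᵥ z) - projSpan A Λ (toE (A *ᵥ z)) = residualMap A Λ z :=
  ((colSpan A Λ).starProjection_orthogonal_val _).symm

lemma toE_mulVec (z : Fin n → ℝ) : toE (A *ᵥ z) = ∑ j, z j • col A j := by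
  ext i
  simp [toE, col, Matrix.mulVec, dotProduct, mul_comm]

lemma toE_mulVec_mem_colSpan {z : Fin n → ℝ} (hz : support z ⊆ Λ) :
    toE (A *ᵥ z) ∈ colSpan A Λ := by
  rw [toE_mulVec, ← Finset.sum_subset (Finset.subset_univ Λ) fun j _ hj =>
    by rw [not_not.1 fun h => hj (hz h), zero_smul]]
  exact Submodule.sum_mem _ fun j hj => Submodule.smul_mem _ _ (Submodule.subset_span ⟨j, hj, rfl⟩)

lemma exists_toE_mulVec_eq_of_mem_colSpan {v : EuclideanSpace ℝ (Fin m)} (hv : v ∈ colSpan A Λ) :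
    ∃ c : Fin n → ℝ, support c ⊆ Λ ∧ toE (A *ᵥ c) = v := by
  obtain ⟨l, hl, rfl⟩ := (Finsupp.mem_span_image_iff_linearCombination ℝ).1 hv
  refine ⟨l, fun j hj => hl (Finsupp.mem_support_iff.2 hj), ?_⟩
  rw [toE_mulVec, Finsupp.linearCombination_apply, Finsupp.sum,
    ← Finset.sum_subset (Finset.subset_univ l.support)
      fun j _ hj => by rw [Finsupp.notMem_support_iff.1 hj, zero_smul]]

lemma residualMap_eq_zero_of_support_subset {z : Fin n → ℝ} (hz : support z ⊆ Λ) :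
    residualMap A Λ z = 0 :=
  Submodule.starProjection_orthogonal_apply_eq_zero (toE_mulVec_mem_colSpan hz)

lemma exists_residualMap_eq_toE_mulVec_sub (z : Fin n → ℝ) :
    ∃ c : Fin n → ℝ, support c ⊆ Λ ∧ residualMap A Λ z = toE (A *ᵥ (z - c)) := by
  obtain ⟨c, hc, hcv⟩ := exists_toE_mulVec_eq_of_mem_colSpan
    ((colSpan A Λ).starProjection_apply_mem (toE (A *ᵥ z)))
  refine ⟨c, hc, ?_⟩
  rw [← sub_projSpan_eq_residualMap, Matrix.mulVec_sub]
  exact congrArg _ hcv.symm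

lemma norm_residualMap_le (z : Fin n → ℝ) : ‖residualMap A Λ z‖ ≤ ‖toE (A *ᵥ z)‖ :=
  Submodule.norm_starProjection_apply_le _ _

lemma inner_residualMap_residualMap (y z : Fin n → ℝ) :
    ⟪residualMap A Λ y, residualMap A Λ z⟫_ℝ = ∑ j, y j * ⟪col A j, residualMap A Λ z⟫_ℝ := by
  rw [residualMap_apply y, Submodule.inner_starProjection_left_eq_right, residualMap_apply,
    Submodule.starProjection_eq_self_iff.2 (Submodule.starProjection_apply_mem _ _),
    ← residualMap_apply, toE_mulVec, sum_inner]
  simp only [real_inner_smul_left]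

end Residual

section RIP

variable {m n s : ℕ} {A : Matrix (Fin m) (Fin n) ℝ} {δ : ℝ} {Λ : Finset (Fin n)}

lemma RIP.norm_residualMap_sq_le (hA : RIP A s δ) {q : Fin n → ℝ} (hq : sparsity q ≤ s) :
    ‖residualMap A Λ q‖ ^ 2 ≤ (1 + δ) * ‖toE q‖ ^ 2 :=
  (pow_le_pow_left₀ (norm_nonneg _) (norm_residualMap_le q) 2).trans (hA q hq).2

lemma RIP.one_sub_mul_norm_sq_le_norm_residualMap_sq (hA : RIP A s δ) (hδ : δ ≤ 1)
    {p : Fin n → ℝ} {F : Finset (Fin n)} (hp : support p ⊆ F) (hFΛ : Disjoint F Λ)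
    (hs : (F ∪ Λ).card ≤ s) :
    (1 - δ) * ‖toE p‖ ^ 2 ≤ ‖residualMap A Λ p‖ ^ 2 := by
  obtain ⟨c, hc, hpc⟩ := exists_residualMap_eq_toE_mulVec_sub (A := A) p
  have hpc_supp : support (p - c) ⊆ ↑(F ∪ Λ) :=
    (support_sub p c).trans (Finset.coe_union F Λ ▸ Set.union_subset_union hp hc)
  have horth : ⟪toE p, toE c⟫_ℝ = 0 :=
    inner_toE_eq_zero_of_disjoint ((Finset.disjoint_coe.2 hFΛ).mono hp hc)
  calc (1 - δ) * ‖toE p‖ ^ 2 ≤ (1 - δ) * ‖toE (p - c)‖ ^ 2 := by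
        have hsub : ‖toE (p - c)‖ ^ 2 = ‖toE p‖ ^ 2 + ‖toE c‖ ^ 2 := by
          simpa [toE, sq] using norm_sub_sq_eq_norm_sq_add_norm_sq_real horth
        exact mul_le_mul_of_nonneg_left (by rw [hsub]; linarith [sq_nonneg ‖toE c‖])
          (by linarith)
    _ ≤ ‖residualMap A Λ p‖ ^ 2 := hpc ▸ (hA _ ((sparsity_le_card hpc_supp).trans hs)).1

lemma RIP.mul_norm_sq_le_norm_residualMap_sq_sub (hA : RIP A s δ) (hδ : δ ≤ 1)
    {u w : Fin n → ℝ} {F G : Finset (Fin n)} (hu : support u ⊆ F) (hw : support w ⊆ G)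
    (hFG : Disjoint F G) (hΛ : Disjoint (F ∪ G) Λ) (hs : (F ∪ G ∪ Λ).card ≤ s)
    {μ t : ℝ} (hμ : 0 < μ) (ht : t ^ 2 * ‖toE w‖ ^ 2 = (μ ^ 2 - 1) * ‖toE u‖ ^ 2) :
    (1 - δ * μ) * ‖toE u‖ ^ 2 ≤
      ‖residualMap A Λ u‖ ^ 2 - t * ⟪residualMap A Λ u, residualMap A Λ w⟫_ℝ := by
  have hsupp : ∀ a b : ℝ, support (a • u + b • w) ⊆ ↑(F ∪ G) := fun a b =>
    (support_add _ _).trans (Finset.coe_union F G ▸ Set.union_subset_union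
      ((support_const_smul_subset a u).trans hu) ((support_const_smul_subset b w).trans hw))
  have hnorm : ∀ a b : ℝ, ‖toE (a • u + b • w)‖ ^ 2 = a ^ 2 * ‖toE u‖ ^ 2 + b ^ 2 * ‖toE w‖ ^ 2 :=
    fun a b => norm_smul_add_smul_sq_of_inner_eq_zero
      (inner_toE_eq_zero_of_disjoint ((Finset.disjoint_coe.2 hFG).mono hu hw)) a b
  have hlower := hA.one_sub_mul_norm_sq_le_norm_residualMap_sq hδ (hsupp (μ + 1) (-t)) hΛ hs
  have hupper := hA.norm_residualMap_sq_le (Λ := Λ) ((sparsity_le_card (hsupp (μ - 1) t)).trans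
    ((Finset.card_le_card Finset.subset_union_left).trans hs))
  have hpolar := norm_sq_sub_norm_sq_eq μ t (residualMap A Λ u) (residualMap A Λ w)
  rw [hnorm] at hlower hupper
  rw [map_add, map_smul, map_smul, neg_smul, ← sub_eq_add_neg] at hlower
  rw [map_add, map_smul, map_smul] at hupper
  have hgap : (1 - δ) * ((μ + 1) ^ 2 * ‖toE u‖ ^ 2 + (-t) ^ 2 * ‖toE w‖ ^ 2)
      - (1 + δ) * ((μ - 1) ^ 2 * ‖toE u‖ ^ 2 + t ^ 2 * ‖toE w‖ ^ 2)
      = 4 * μ * ((1 - δ * μ) * ‖toE u‖ ^ 2) := by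
    linear_combination (-2 * δ) * ht
  refine le_of_mul_le_mul_left ?_ (by positivity : (0 : ℝ) < 4 * μ)
  linarith

theorem RIP.inf'_abs_inner_col_lt_sup'_abs_inner_col (hA : RIP A s δ)
    {S W : Finset (Fin n)} (hS : S.Nonempty) (hW : W.Nonempty) (hSW : Disjoint S W)
    (hΛ : Disjoint (S ∪ W) Λ) (hs : (S ∪ W ∪ Λ).card ≤ s)
    (hδ : δ * √((S.card : ℝ) / W.card + 1) < 1) {u : Fin n → ℝ} (hu : support u ⊆ S)
    (hu0 : u ≠ 0) :
    W.inf' hW (fun i => |⟪col A i, residualMap A Λ u⟫_ℝ|)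
      < S.sup' hS (fun i => |⟪col A i, residualMap A Λ u⟫_ℝ|) := by
  set r := residualMap A Λ u
  set c : Fin n → ℝ := fun j => ⟪col A j, r⟫_ℝ
  set α := S.sup' hS (fun i => |c i|)
  set μ := √((S.card : ℝ) / W.card + 1)
  by_contra! hle
  obtain ⟨w, hw, hw_norm, hw_sum⟩ := exists_sign_vector W c
  have hWpos : (0 : ℝ) < W.card := by exact_mod_cast hW.card_pos
  have hμ1 : 1 ≤ μ :=
    Real.one_le_sqrt.2 (by linarith [div_nonneg (Nat.cast_nonneg S.card) hWpos.le])
  have ha : 0 < ‖toE u‖ := norm_pos_iff.2 fun h => hu0 (by simpa [toE] using h)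
  set t := √S.card * ‖toE u‖ / W.card
  -- `t N = √|S| ‖u‖` matches the two bounds on `‖r‖²` and `⟪r, R w⟫`; `μ` is then forced by `ht`.
  have ht : t ^ 2 * ‖toE w‖ ^ 2 = (μ ^ 2 - 1) * ‖toE u‖ ^ 2 := by
    rw [hw_norm, Real.sq_sqrt (by positivity), div_pow, mul_pow, Real.sq_sqrt (by positivity)]
    field_simp
    ring
  have hkey : (1 - δ * μ) * ‖toE u‖ ^ 2 ≤ ‖r‖ ^ 2 - t * ⟪r, residualMap A Λ w⟫_ℝ :=
    hA.mul_norm_sq_le_norm_residualMap_sq_sub (by nlinarith) hu hw hSW hΛ hs (by positivity) ht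
  have hr : ‖r‖ ^ 2 ≤ α * (√S.card * ‖toE u‖) := by
    rw [← real_inner_self_eq_norm_sq, inner_residualMap_residualMap]
    exact sum_mul_le_sup'_mul_sqrt_card_mul_norm hS hu c
  have hrw : W.card * α ≤ ⟪r, residualMap A Λ w⟫_ℝ := by
    rw [real_inner_comm, inner_residualMap_residualMap, hw_sum]
    calc W.card * α ≤ W.card * W.inf' hW (fun i => |c i|) := by gcongr
      _ ≤ ∑ j ∈ W, |c j| := by
        rw [← nsmul_eq_mul]
        exact W.card_nsmul_le_sum _ _ fun j hj => W.inf'_le _ hj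
  have htN : t * (W.card * α) = α * (√S.card * ‖toE u‖) := by
    rw [← mul_assoc, div_mul_cancel₀ _ hWpos.ne', mul_comm]
  have htrw := mul_le_mul_of_nonneg_left hrw (by positivity : 0 ≤ t)
  have hpos : 0 < (1 - δ * μ) * ‖toE u‖ ^ 2 := mul_pos (by linarith) (by positivity)
  linarith

end RIP

lemma mul_sqrt_div_add_one_lt_one {δ : ℝ} {k K N : ℕ} (hkK : k ≤ K)
    (hδ : δ < 1 / √((K : ℝ) / N + 1)) : δ * √((k : ℝ) / N + 1) < 1 := by
  have hδK : δ * √((K : ℝ) / N + 1) < 1 := (lt_div_iff₀ (Real.sqrt_pos.2 (by positivity))).1 hδ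
  rcases le_or_gt δ 0 with hδ0 | hδ0
  · exact (mul_nonpos_of_nonpos_of_nonneg hδ0 (Real.sqrt_nonneg _)).trans_lt one_pos
  · refine lt_of_le_of_lt (mul_le_mul_of_nonneg_left (Real.sqrt_le_sqrt ?_) hδ0.le) hδK
    gcongr

theorem stmt6_general {m n : ℕ} (K N : ℕ)
    (A : Matrix (Fin m) (Fin n) ℝ) (δ : ℝ)
    (hδ : δ < 1 / Real.sqrt ((K : ℝ) / N + 1))
    (hRIP : RIP A (N * K + 1) δ)
    (x : Fin n → ℝ) (T : Finset (Fin n)) (hT : ∀ i, i ∈ T ↔ x i ≠ 0) (hTK : T.card ≤ K)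
    (Λ : Finset (Fin n)) (hTΛ : (T \ Λ).Nonempty)
    (hcard : (T ∪ Λ).card + N ≤ N * K + 1)
    (W : Finset (Fin n)) (hWcard : W.card = N) (hWne : W.Nonempty)
    (hWdis : Disjoint W (T ∪ Λ)) :
    W.inf' hWne (fun i =>
        |⟪col A i, toE (A.mulVec x) - projSpan A Λ (toE (A.mulVec x))⟫_ℝ|)
      < (T \ Λ).sup' hTΛ (fun i =>
        |⟪col A i, toE (A.mulVec x) - projSpan A Λ (toE (A.mulVec x))⟫_ℝ|) := by
  set u := (↑(T \ Λ) : Set (Fin n)).indicator x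
  have hxu : support (x - u) ⊆ Λ := by
    rw [← Set.indicator_compl, Set.support_indicator]
    rintro j ⟨hjS, hjx⟩
    by_contra hjΛ
    exact hjS (Finset.mem_sdiff.2 ⟨(hT j).2 hjx, hjΛ⟩)
  have hr : residualMap A Λ x = residualMap A Λ u := by
    rw [← sub_add_cancel x u, map_add, residualMap_eq_zero_of_support_subset hxu, zero_add]
  have hu0 : u ≠ 0 := fun h => by
    obtain ⟨i, hi⟩ := hTΛ
    exact (hT i).1 (Finset.mem_sdiff.1 hi).1
      ((Set.indicator_of_mem (Finset.mem_coe.2 hi) x).symm.trans (congrFun h i))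
  have hWΛ : Disjoint W Λ := hWdis.mono_right Finset.subset_union_right
  have hs : (T \ Λ ∪ W ∪ Λ).card ≤ N * K + 1 := by
    rw [Finset.union_right_comm, Finset.sdiff_union_self_eq_union]
    exact (Finset.card_union_le _ _).trans (by rw [hWcard]; exact hcard)
  simp only [sub_projSpan_eq_residualMap, hr]
  exact hRIP.inf'_abs_inner_col_lt_sup'_abs_inner_col hTΛ hWne
    (hWdis.mono_right (Finset.sdiff_subset.trans Finset.subset_union_left)).symm
    (Finset.disjoint_union_left.2 ⟨Finset.sdiff_disjoint, hWΛ⟩) hs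
    (hWcard ▸ mul_sqrt_div_add_one_lt_one ((Finset.card_le_card Finset.sdiff_subset).trans hTK) hδ)
    Set.support_indicator_subset hu0

/-- Theorem 2 of Chen–Ge (non-initial iterations of gOMP succeed): if `A` satisfies the RIP
of order `NK+1` with constant `δ < 1/√(K/N + 1)`, `x` has support `T` with `|T| ≤ K`,
`T \ Λ ≠ ∅`, `|T ∪ Λ| + N ≤ NK + 1`, and `W` has size `N` and is disjoint from `T ∪ Λ`,
then for the residual `r = Ax − P_Λ(Ax)`,
`max_{i∈T\Λ} |⟨Aeᵢ, r⟩| > min_{i∈W} |⟨Aeᵢ, r⟩|`. -/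
theorem stmt6 {m n : ℕ} (K N : ℕ) (hK : 1 ≤ K) (hN : 1 ≤ N)
    (A : Matrix (Fin m) (Fin n) ℝ) (δ : ℝ)
    (hδ : δ < 1 / Real.sqrt ((K : ℝ) / N + 1))
    (hRIP : RIP A (N * K + 1) δ)
    (x : Fin n → ℝ) (T : Finset (Fin n)) (hT : ∀ i, i ∈ T ↔ x i ≠ 0) (hTK : T.card ≤ K)
    (Λ : Finset (Fin n)) (hTΛ : (T \ Λ).Nonempty)
    (hcard : (T ∪ Λ).card + N ≤ N * K + 1)
    (W : Finset (Fin n)) (hWcard : W.card = N) (hWne : W.Nonempty)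
    (hWdis : Disjoint W (T ∪ Λ)) :
    W.inf' hWne (fun i =>
        |⟪col A i, toE (A.mulVec x) - projSpan A Λ (toE (A.mulVec x))⟫_ℝ|)
      < (T \ Λ).sup' hTΛ (fun i =>
        |⟪col A i, toE (A.mulVec x) - projSpan A Λ (toE (A.mulVec x))⟫_ℝ|) :=
  stmt6_general K N A δ hδ hRIP x T hT hTK Λ hTΛ hcard W hWcard hWne hWdis
end
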